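/- arXiv:1908.09078 — 2 statements merged into one kernel-verified Lean document; each statement's English description precedes it below -/
import Mathlib

section
/- Let A : ℝ^{m×n} → ℝ^p be a linear map, let r ≥ 1 be an integer, and let α = λ_{2r,min}(A*A) and β = λ_{2r,max}(A*A) with α > 0. Let M ∈ ℝ^{m×n} with rank(M) ≤ r and σ₁ = σ₁(M) > 0. Let U ∈ ℝ^{m×κ} and V ∈ ℝ^{n×κ} satisfy rank(U) ≤ r, rank(V) ≤ r, ‖U‖ ≤ √(2σ₁), ‖V‖ ≤ √(2σ₁), and set E = UVᵀ − M, assumed nonzero. Then 2√σ₁ · √( ‖[A*A(E)]V‖_F² + ‖Uᵀ[A*A(E)]‖_F² ) ≥ (β+α)·( ‖EV‖_F² + ‖UᵀE‖_F² )/(2‖E‖_F) − 2σ₁(β−α)‖E‖_F. -/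
open scoped BigOperators

noncomputable section

namespace Paper

open Matrix

/-- Euclidean dot product on `ℝ^p`. -/
def vdot {p : ℕ} (y z : Fin p → ℝ) : ℝ := ∑ i, y i * z i

/-- Euclidean norm on `ℝ^p`. -/
def vnorm {p : ℕ} (y : Fin p → ℝ) : ℝ := Real.sqrt (∑ i, (y i) ^ 2)

/-- Trace (Frobenius) inner product of matrices. -/
def finner {m n : ℕ} (X Y : Matrix (Fin m) (Fin n) ℝ) : ℝ := ∑ i, ∑ j, X i j * Y i j

/-- Frobenius norm of a matrix. -/
def fnorm {m n : ℕ} (X : Matrix (Fin m) (Fin n) ℝ) : ℝ := Real.sqrt (∑ i, ∑ j, (X i j) ^ 2)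

/-- Euclidean norm of the `j`-th column of a matrix. -/
def colNorm {m k : ℕ} (U : Matrix (Fin m) (Fin k) ℝ) (j : Fin k) : ℝ :=
  Real.sqrt (∑ i, (U i j) ^ 2)

/-- The `ℓ_{2,0}` norm of a matrix: the number of nonzero columns. -/
def l20 {m k : ℕ} (U : Matrix (Fin m) (Fin k) ℝ) : ℕ :=
  Set.ncard {j : Fin k | (fun i => U i j) ≠ 0}

/-- Number of nonzero entries of a vector. -/
def zeroNorm {k : ℕ} (z : Fin k → ℝ) : ℕ := Set.ncard {i : Fin k | z i ≠ 0}

/-- `k`-restricted smallest eigenvalue of `A*A`. -/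
def lamMin {m n p : ℕ} (A : Matrix (Fin m) (Fin n) ℝ →ₗ[ℝ] (Fin p → ℝ)) (k : ℕ) : ℝ :=
  sInf {t : ℝ | ∃ X : Matrix (Fin m) (Fin n) ℝ, X.rank ≤ k ∧ fnorm X = 1 ∧ t = (vnorm (A X)) ^ 2}

/-- `k`-restricted largest eigenvalue of `A*A`. -/
def lamMax {m n p : ℕ} (A : Matrix (Fin m) (Fin n) ℝ →ₗ[ℝ] (Fin p → ℝ)) (k : ℕ) : ℝ :=
  sSup {t : ℝ | ∃ X : Matrix (Fin m) (Fin n) ℝ, X.rank ≤ k ∧ fnorm X = 1 ∧ t = (vnorm (A X)) ^ 2}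

/-- Operator (spectral) norm of the sampling operator. -/
def opNorm {m n p : ℕ} (A : Matrix (Fin m) (Fin n) ℝ →ₗ[ℝ] (Fin p → ℝ)) : ℝ :=
  sSup {t : ℝ | ∃ X : Matrix (Fin m) (Fin n) ℝ, fnorm X = 1 ∧ t = vnorm (A X)}

/-- Spectral norm of a matrix. -/
def specNorm {a b : ℕ} (U : Matrix (Fin a) (Fin b) ℝ) : ℝ :=
  sSup {t : ℝ | ∃ x : Fin b → ℝ, vnorm x = 1 ∧ t = vnorm (U.mulVec x)}

/-- Adjoint of `A` w.r.t. the trace inner product, applied to `y`. -/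
def adjApply {m n p : ℕ} (A : Matrix (Fin m) (Fin n) ℝ →ₗ[ℝ] (Fin p → ℝ))
    (y : Fin p → ℝ) : Matrix (Fin m) (Fin n) ℝ :=
  fun i j => vdot (A (Matrix.single i j 1)) y

/-- `A*A` applied to a matrix. -/
def AstarA {m n p : ℕ} (A : Matrix (Fin m) (Fin n) ℝ →ₗ[ℝ] (Fin p → ℝ))
    (X : Matrix (Fin m) (Fin n) ℝ) : Matrix (Fin m) (Fin n) ℝ :=
  adjApply A (A X)

/-- Singular values of `X` arranged nonincreasingly, `sigmaFin X 0` the largest. -/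
def sigmaFin {m n : ℕ} (X : Matrix (Fin m) (Fin n) ℝ) : Fin m → ℝ := fun j =>
  Real.sqrt ((Matrix.isHermitian_mul_conjTranspose_self X).eigenvalues
    ((Tuple.sort (Matrix.isHermitian_mul_conjTranspose_self X).eigenvalues) j.rev))

/-- The `i`-th largest singular value (1-indexed); `0` for out-of-range indices. -/
def singularValue {m n : ℕ} (i : ℕ) (X : Matrix (Fin m) (Fin n) ℝ) : ℝ :=
  if h : 1 ≤ i ∧ i ≤ m then sigmaFin X ⟨i - 1, by omega⟩ else 0

/-- The family `𝓛` of proper lsc convex functions `φ : ℝ → (−∞,∞]` with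
`[0,1] ⊆ int(dom φ)`, `φ(1) = 1` and `min_{t ∈ [0,1]} φ(t) = 0` attained at `t*`. -/
structure LFamily where
  phi : ℝ → EReal
  lsc : LowerSemicontinuous phi
  convex : ∀ x y a b : ℝ, 0 ≤ a → 0 ≤ b → a + b = 1 →
    phi (a * x + b * y) ≤ (a : EReal) * phi x + (b : EReal) * phi y
  ne_bot : ∀ x, phi x ≠ ⊥
  icc_subset_interior_dom : Set.Icc (0 : ℝ) 1 ⊆ interior {t : ℝ | phi t ≠ ⊤}
  phi_one : phi 1 = 1
  tstar : ℝ
  tstar_mem : tstar ∈ Set.Icc (0 : ℝ) 1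
  phi_tstar : phi tstar = 0
  phi_nonneg : ∀ t ∈ Set.Icc (0 : ℝ) 1, 0 ≤ phi t

/-- Left derivative of `φ` at `1`, as the supremum of difference quotients. -/
def leftDerivOne (L : LFamily) : ℝ :=
  sSup {q : ℝ | ∃ t : ℝ, 0 ≤ t ∧ t < 1 ∧ q = (1 - (L.phi t).toReal) / (1 - t)}

/-- The function `ψ`: equal to `φ` on `[0,1]` and `+∞` elsewhere. -/
def psi (L : LFamily) (t : ℝ) : EReal := if t ∈ Set.Icc (0 : ℝ) 1 then L.phi t else ⊤

/-- The conjugate `ψ*` of `ψ`. -/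
def psiStar (L : LFamily) (s : ℝ) : EReal := ⨆ t : ℝ, ((s * t : ℝ) : EReal) - psi L t


/-!
Put `X = (EV)Vᵀ + U(UᵀE)`. Then `⟨E, X⟩ = ‖EV‖² + ‖UᵀE‖²`, and `E + tX = U(⋯) + M(⋯)` has rank
at most `2r` for every `t`. Polarizing the restricted isometry bounds `α‖Z‖² ≤ ‖A Z‖² ≤ β‖Z‖²` at
`Z = E ± tX` with `t = ‖E‖/‖X‖` gives `⟨A E, A X⟩ ≥ (α+β)/2 ⟨E, X⟩ - (β-α)/2 ‖E‖‖X‖`. The left side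
is `⟨A*A(E), X⟩`, which Cauchy–Schwarz bounds by the square root on the right of the claim times
`√(‖EV‖² + ‖UᵀE‖²)`. Finally `‖U‖, ‖V‖ ≤ √(2σ₁)` give `√(‖EV‖² + ‖UᵀE‖²) ≤ 2√σ₁‖E‖` and
`‖X‖ ≤ 2√σ₁ √(‖EV‖² + ‖UᵀE‖²)`; dividing by `‖E‖` yields the claim.
-/

open scoped RealInnerProductSpace Matrix.Norms.L2Operator

section InnerProductSpace

variable {E F : Type*} [NormedAddCommGroup E] [InnerProductSpace ℝ E]

lemma norm_add_smul_sq_real (x y : E) (t : ℝ) :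
    ‖x + t • y‖ ^ 2 = ‖x‖ ^ 2 + 2 * t * ⟪x, y⟫ + t ^ 2 * ‖y‖ ^ 2 := by
  rw [norm_add_sq_real, inner_smul_right, norm_smul, mul_pow, Real.norm_eq_abs, sq_abs]
  ring

variable [NormedAddCommGroup F] [InnerProductSpace ℝ F]

lemma inner_map_ge_of_restricted_bounds (f : E →ₗ[ℝ] F) {α β : ℝ} {x y : E}
    (hlow : ∀ t : ℝ, α * ‖x + t • y‖ ^ 2 ≤ ‖f (x + t • y)‖ ^ 2)
    (hup : ∀ t : ℝ, ‖f (x + t • y)‖ ^ 2 ≤ β * ‖x + t • y‖ ^ 2) :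
    (α + β) / 2 * ⟪x, y⟫ - (β - α) / 2 * ‖x‖ * ‖y‖ ≤ ⟪f x, f y⟫ := by
  rcases eq_or_ne x 0 with rfl | hx
  · simp
  rcases eq_or_ne y 0 with rfl | hy
  · simp
  -- `4t⟪f x, f y⟫ = ‖f (x + ty)‖² - ‖f (x - ty)‖²`; this `t` balances `‖x‖² + t²‖y‖² ≥ 2t‖x‖‖y‖`.
  set t := ‖x‖ / ‖y‖
  have htpos : 0 < t := div_pos (norm_pos_iff.2 hx) (norm_pos_iff.2 hy)
  have hty : t * ‖y‖ = ‖x‖ := div_mul_cancel₀ _ (norm_ne_zero_iff.2 hy)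
  have h1 := hlow t
  have h2 := hup (-t)
  simp only [map_add, map_smul, norm_add_smul_sq_real] at h1 h2
  rw [← mul_le_mul_iff_of_pos_left (by positivity : (0 : ℝ) < 4 * t)]
  rw [← hty] at h1 h2 ⊢
  linear_combination h1 + h2

end InnerProductSpace

lemma Matrix.rank_add_le {K m n : Type*} [Field K] [Fintype m] [Fintype n]
    (P Q : Matrix m n K) : (P + Q).rank ≤ P.rank + Q.rank := by
  have hrange : LinearMap.range (P + Q).mulVecLin ≤
      LinearMap.range P.mulVecLin ⊔ LinearMap.range Q.mulVecLin := by
    rintro _ ⟨v, rfl⟩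
    rw [Matrix.mulVecLin_add]
    exact Submodule.add_mem_sup (LinearMap.mem_range_self _ v) (LinearMap.mem_range_self _ v)
  exact (Submodule.finrank_mono hrange).trans (Submodule.finrank_add_le_finrank_add_finrank _ _)

section Euclidean

variable {m n p : ℕ}

def vec : Matrix (Fin m) (Fin n) ℝ ≃ₗ[ℝ] EuclideanSpace ℝ (Fin m × Fin n) :=
  (LinearEquiv.curry ℝ ℝ (Fin m) (Fin n)).symm ≪≫ₗ (WithLp.linearEquiv 2 ℝ _).symm

@[simp] lemma vec_apply (X : Matrix (Fin m) (Fin n) ℝ) (q : Fin m × Fin n) :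
    vec X q = X q.1 q.2 := rfl

def toEuclideanMap (A : Matrix (Fin m) (Fin n) ℝ →ₗ[ℝ] (Fin p → ℝ)) :
    EuclideanSpace ℝ (Fin m × Fin n) →ₗ[ℝ] EuclideanSpace ℝ (Fin p) :=
  (WithLp.linearEquiv 2 ℝ (Fin p → ℝ)).symm.toLinearMap ∘ₗ A ∘ₗ vec.symm.toLinearMap

lemma toEuclideanMap_vec (A : Matrix (Fin m) (Fin n) ℝ →ₗ[ℝ] (Fin p → ℝ))
    (X : Matrix (Fin m) (Fin n) ℝ) : toEuclideanMap A (vec X) = WithLp.toLp 2 (A X) := by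
  simp [toEuclideanMap]

lemma vnorm_eq_norm (y : Fin p → ℝ) : vnorm y = ‖WithLp.toLp 2 y‖ := by
  simp [vnorm, EuclideanSpace.norm_eq]

lemma vdot_eq_inner (y z : Fin p → ℝ) : vdot y z = ⟪WithLp.toLp 2 y, WithLp.toLp 2 z⟫ := by
  simp [vdot, PiLp.inner_apply, mul_comm]

lemma fnorm_eq_norm (X : Matrix (Fin m) (Fin n) ℝ) : fnorm X = ‖vec X‖ := by
  simp [fnorm, EuclideanSpace.norm_eq, Fintype.sum_prod_type]

lemma finner_eq_inner (X Y : Matrix (Fin m) (Fin n) ℝ) : finner X Y = ⟪vec X, vec Y⟫ := by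
  simp [finner, PiLp.inner_apply, Fintype.sum_prod_type, mul_comm]

lemma fnorm_nonneg (X : Matrix (Fin m) (Fin n) ℝ) : 0 ≤ fnorm X := Real.sqrt_nonneg _

lemma fnorm_sq (X : Matrix (Fin m) (Fin n) ℝ) : fnorm X ^ 2 = ∑ i, ∑ j, X i j ^ 2 :=
  Real.sq_sqrt (by positivity)

lemma fnorm_pos {X : Matrix (Fin m) (Fin n) ℝ} (hX : X ≠ 0) : 0 < fnorm X := by
  rw [fnorm_eq_norm]
  exact norm_pos_iff.2 (vec.map_ne_zero_iff.2 hX)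

lemma fnorm_add_le (X Y : Matrix (Fin m) (Fin n) ℝ) : fnorm (X + Y) ≤ fnorm X + fnorm Y := by
  simpa only [fnorm_eq_norm, map_add] using norm_add_le (vec X) (vec Y)

lemma finner_le_fnorm_mul_fnorm (X Y : Matrix (Fin m) (Fin n) ℝ) :
    finner X Y ≤ fnorm X * fnorm Y := by
  simpa only [finner_eq_inner, fnorm_eq_norm] using real_inner_le_norm (vec X) (vec Y)

lemma specNorm_eq_l2_opNorm (U : Matrix (Fin m) (Fin n) ℝ) : specNorm U = ‖U‖ := by
  rw [Matrix.l2_opNorm_def, ← ContinuousLinearMap.sSup_sphere_eq_norm, specNorm]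
  congr 1
  ext t
  simp only [vnorm_eq_norm, Set.mem_ofPred_eq, Set.mem_image, mem_sphere_iff_norm, sub_zero]
  constructor
  · rintro ⟨x, hx, rfl⟩
    exact ⟨WithLp.toLp 2 x, hx, rfl⟩
  · rintro ⟨x, hx, rfl⟩
    exact ⟨x.ofLp, hx, rfl⟩

lemma finner_adjApply (A : Matrix (Fin m) (Fin n) ℝ →ₗ[ℝ] (Fin p → ℝ))
    (y : Fin p → ℝ) (X : Matrix (Fin m) (Fin n) ℝ) :
    finner (adjApply A y) X = vdot y (A X) := by
  conv_rhs => rw [X.matrix_eq_sum_single]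
  simp only [map_sum, vdot_eq_inner, WithLp.toLp_sum, inner_sum, finner, adjApply]
  refine Finset.sum_congr rfl fun i _ => Finset.sum_congr rfl fun j _ => ?_
  rw [show Matrix.single i j (X i j) = X i j • Matrix.single i j 1 by simp, map_smul,
    WithLp.toLp_smul, inner_smul_right, real_inner_comm, mul_comm]

end Euclidean

section Frobenius

variable {a b c : ℕ}

lemma finner_eq_trace (X Y : Matrix (Fin a) (Fin b) ℝ) : finner X Y = (Xᵀ * Y).trace := by
  simp only [finner, Matrix.trace, Matrix.diag, Matrix.mul_apply, Matrix.transpose_apply]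
  exact Finset.sum_comm

lemma fnorm_transpose (X : Matrix (Fin a) (Fin b) ℝ) : fnorm Xᵀ = fnorm X := by
  simp only [fnorm, Matrix.transpose_apply]
  rw [Finset.sum_comm]

lemma fnorm_sq_eq_sum_col (X : Matrix (Fin a) (Fin b) ℝ) :
    fnorm X ^ 2 = ∑ j, ‖WithLp.toLp 2 (Xᵀ j)‖ ^ 2 := by
  rw [fnorm_sq, Finset.sum_comm]
  simp [EuclideanSpace.norm_sq_eq]

lemma l2_opNorm_transpose (U : Matrix (Fin a) (Fin b) ℝ) : ‖Uᵀ‖ = ‖U‖ := by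
  rw [← Matrix.conjTranspose_eq_transpose_of_trivial, Matrix.l2_opNorm_conjTranspose]

lemma fnorm_mul_le_opNorm_mul (U : Matrix (Fin a) (Fin b) ℝ) (W : Matrix (Fin b) (Fin c) ℝ) :
    fnorm (U * W) ≤ ‖U‖ * fnorm W := by
  refine le_of_sq_le_sq ?_ (mul_nonneg (norm_nonneg _) (fnorm_nonneg W))
  rw [mul_pow, fnorm_sq_eq_sum_col, fnorm_sq_eq_sum_col, Finset.mul_sum]
  gcongr with j
  rw [← mul_pow]
  gcongr
  have hcol : (U * W)ᵀ j = U *ᵥ Wᵀ j := by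
    ext i
    simp [Matrix.mul_apply, Matrix.mulVec, dotProduct]
  rw [hcol]
  exact Matrix.l2_opNorm_mulVec U (WithLp.toLp 2 (Wᵀ j))

lemma fnorm_mul_le_mul_opNorm (W : Matrix (Fin a) (Fin b) ℝ) (U : Matrix (Fin b) (Fin c) ℝ) :
    fnorm (W * U) ≤ fnorm W * ‖U‖ := by
  rw [← fnorm_transpose, Matrix.transpose_mul, ← fnorm_transpose W, ← l2_opNorm_transpose U,
    mul_comm]
  exact fnorm_mul_le_opNorm_mul _ _

end Frobenius

section Restricted

variable {m n p : ℕ} (A : Matrix (Fin m) (Fin n) ℝ →ₗ[ℝ] (Fin p → ℝ)) {k : ℕ}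

/-- The set whose infimum and supremum are `lamMin A k` and `lamMax A k`. -/
def restrictedValues (k : ℕ) : Set ℝ :=
  {t : ℝ | ∃ X : Matrix (Fin m) (Fin n) ℝ, X.rank ≤ k ∧ fnorm X = 1 ∧ t = (vnorm (A X)) ^ 2}

lemma restrictedValues_bddBelow : BddBelow (restrictedValues A k) :=
  ⟨0, by rintro _ ⟨X, -, -, rfl⟩; positivity⟩

lemma restrictedValues_bddAbove : BddAbove (restrictedValues A k) := by
  refine ⟨‖LinearMap.toContinuousLinearMap (toEuclideanMap A)‖ ^ 2, ?_⟩
  rintro _ ⟨X, -, hX, rfl⟩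
  rw [vnorm_eq_norm, ← toEuclideanMap_vec]
  gcongr
  simpa [← fnorm_eq_norm, hX] using
    (LinearMap.toContinuousLinearMap (toEuclideanMap A)).le_opNorm (vec X)

variable {A}

lemma sq_div_mem_restrictedValues {Z : Matrix (Fin m) (Fin n) ℝ} (hZ : Z.rank ≤ k)
    (hZ0 : Z ≠ 0) : (vnorm (A Z) / fnorm Z) ^ 2 ∈ restrictedValues A k := by
  have hpos := fnorm_pos hZ0
  have hinv : ‖(fnorm Z)⁻¹‖ = (fnorm Z)⁻¹ := Real.norm_of_nonneg (inv_nonneg.2 hpos.le)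
  refine ⟨(fnorm Z)⁻¹ • Z, ?_, ?_, ?_⟩
  · rwa [Matrix.rank_smul_of_mem_nonZeroDivisors _ (mem_nonZeroDivisors_of_ne_zero (by positivity))]
  · rw [fnorm_eq_norm, map_smul, norm_smul, ← fnorm_eq_norm, hinv]
    field_simp
  · rw [map_smul, vnorm_eq_norm, vnorm_eq_norm, WithLp.toLp_smul, norm_smul, hinv]
    field_simp

lemma lamMin_mul_fnorm_sq_le {Z : Matrix (Fin m) (Fin n) ℝ} (hZ : Z.rank ≤ k) :
    lamMin A k * fnorm Z ^ 2 ≤ vnorm (A Z) ^ 2 := by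
  rcases eq_or_ne Z 0 with rfl | hZ0
  · rw [fnorm_eq_norm, map_zero, norm_zero, zero_pow two_ne_zero, mul_zero]
    positivity
  have h := csInf_le (restrictedValues_bddBelow A) (sq_div_mem_restrictedValues hZ hZ0)
  rwa [div_pow, le_div_iff₀ (pow_pos (fnorm_pos hZ0) 2)] at h

lemma vnorm_sq_le_lamMax_mul_fnorm_sq {Z : Matrix (Fin m) (Fin n) ℝ} (hZ : Z.rank ≤ k) :
    vnorm (A Z) ^ 2 ≤ lamMax A k * fnorm Z ^ 2 := by
  rcases eq_or_ne Z 0 with rfl | hZ0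
  · rw [fnorm_eq_norm, map_zero, map_zero, vnorm_eq_norm]
    simp
  have h := le_csSup (restrictedValues_bddAbove A) (sq_div_mem_restrictedValues hZ hZ0)
  rwa [div_pow, div_le_iff₀ (pow_pos (fnorm_pos hZ0) 2)] at h

lemma lamMin_le_lamMax {Z : Matrix (Fin m) (Fin n) ℝ} (hZ : Z.rank ≤ k) (hZ0 : Z ≠ 0) :
    lamMin A k ≤ lamMax A k :=
  le_of_mul_le_mul_right ((lamMin_mul_fnorm_sq_le hZ).trans (vnorm_sq_le_lamMax_mul_fnorm_sq hZ))
    (pow_pos (fnorm_pos hZ0) 2)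

variable (A)

lemma vdot_ge_of_rank_add_smul_le {E X : Matrix (Fin m) (Fin n) ℝ}
    (hrank : ∀ t : ℝ, (E + t • X).rank ≤ k) :
    (lamMin A k + lamMax A k) / 2 * finner E X -
      (lamMax A k - lamMin A k) / 2 * fnorm E * fnorm X ≤ vdot (A E) (A X) := by
  have hvec (t : ℝ) : vec E + t • vec X = vec (E + t • X) := by rw [map_add, map_smul]
  simpa only [finner_eq_inner, fnorm_eq_norm, vdot_eq_inner, toEuclideanMap_vec] using
    inner_map_ge_of_restricted_bounds (toEuclideanMap A) (x := vec E) (y := vec X)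
      (fun t => by
        simpa only [hvec, toEuclideanMap_vec, ← fnorm_eq_norm, ← vnorm_eq_norm] using
          lamMin_mul_fnorm_sq_le (hrank t))
      (fun t => by
        simpa only [hvec, toEuclideanMap_vec, ← fnorm_eq_norm, ← vnorm_eq_norm] using
          vnorm_sq_le_lamMax_mul_fnorm_sq (hrank t))

end Restricted

section Tangent

variable {m n κ : ℕ} (U : Matrix (Fin m) (Fin κ) ℝ) (V : Matrix (Fin n) (Fin κ) ℝ)

/-- `dU * Vᵀ + U * dVᵀ` at `(dU, dV) = (P * V, Pᵀ * U)`: for `P = U * Vᵀ - M` this is the image of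
the gradient of `½‖U * Vᵀ - M‖²` under the differential of `(U, V) ↦ U * Vᵀ`. -/
def tangentMap (P : Matrix (Fin m) (Fin n) ℝ) : Matrix (Fin m) (Fin n) ℝ :=
  P * V * Vᵀ + U * (Uᵀ * P)

lemma finner_tangentMap (G P : Matrix (Fin m) (Fin n) ℝ) :
    finner G (tangentMap U V P) = finner (G * V) (P * V) + finner (Uᵀ * G) (Uᵀ * P) := by
  simp only [finner_eq_trace, tangentMap, Matrix.mul_add, Matrix.trace_add, Matrix.transpose_mul,
    Matrix.transpose_transpose, Matrix.mul_assoc]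
  rw [Matrix.trace_mul_comm Vᵀ]
  simp only [Matrix.mul_assoc]

lemma finner_self_tangentMap (P : Matrix (Fin m) (Fin n) ℝ) :
    finner P (tangentMap U V P) = fnorm (P * V) ^ 2 + fnorm (Uᵀ * P) ^ 2 := by
  rw [finner_tangentMap, finner_eq_inner, finner_eq_inner, real_inner_self_eq_norm_sq,
    real_inner_self_eq_norm_sq, fnorm_eq_norm, fnorm_eq_norm]

lemma finner_tangentMap_le (G P : Matrix (Fin m) (Fin n) ℝ) :
    finner G (tangentMap U V P) ≤ √(fnorm (G * V) ^ 2 + fnorm (Uᵀ * G) ^ 2) *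
      √(fnorm (P * V) ^ 2 + fnorm (Uᵀ * P) ^ 2) := by
  have cauchy_schwarz_two (a b c d : ℝ) :
      a * c + b * d ≤ √(a ^ 2 + b ^ 2) * √(c ^ 2 + d ^ 2) := by
    rw [← Real.sqrt_mul (by positivity)]
    exact Real.le_sqrt_of_sq_le (by nlinarith [sq_nonneg (a * d - b * c)])
  rw [finner_tangentMap]
  exact (add_le_add (finner_le_fnorm_mul_fnorm _ _) (finner_le_fnorm_mul_fnorm _ _)).trans
    (cauchy_schwarz_two _ _ _ _)

lemma fnorm_tangentMap_le (P : Matrix (Fin m) (Fin n) ℝ) :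
    fnorm (tangentMap U V P) ≤ fnorm (P * V) * ‖V‖ + ‖U‖ * fnorm (Uᵀ * P) := by
  refine (fnorm_add_le _ _).trans (add_le_add ?_ (fnorm_mul_le_opNorm_mul _ _))
  simpa only [l2_opNorm_transpose] using fnorm_mul_le_mul_opNorm (P * V) Vᵀ

lemma rank_add_smul_tangentMap_le (M : Matrix (Fin m) (Fin n) ℝ) (t : ℝ) :
    (U * Vᵀ - M + t • tangentMap U V (U * Vᵀ - M)).rank ≤ U.rank + M.rank := by
  have h : U * Vᵀ - M + t • tangentMap U V (U * Vᵀ - M) =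
      U * (Vᵀ + t • (Vᵀ * V * Vᵀ) + t • (Uᵀ * (U * Vᵀ - M))) + M * (-1 - t • (V * Vᵀ)) := by
    simp only [tangentMap, Matrix.mul_add, Matrix.mul_sub, Matrix.sub_mul, Matrix.mul_smul,
      Matrix.mul_assoc, Matrix.mul_one, Matrix.mul_neg, smul_add, smul_sub]
    abel
  rw [h]
  exact (Matrix.rank_add_le _ _).trans
    (add_le_add (Matrix.rank_mul_le_left _ _) (Matrix.rank_mul_le_left _ _))

variable {U V} {c : ℝ}

lemma sqrt_fnorm_sq_add_le (hU : ‖U‖ ≤ c) (hV : ‖V‖ ≤ c) (P : Matrix (Fin m) (Fin n) ℝ) :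
    √(fnorm (P * V) ^ 2 + fnorm (Uᵀ * P) ^ 2) ≤ √2 * c * fnorm P := by
  have hPV : fnorm (P * V) ≤ c * fnorm P := by
    grw [fnorm_mul_le_mul_opNorm, hV, mul_comm]
    exact fnorm_nonneg P
  have hUP : fnorm (Uᵀ * P) ≤ c * fnorm P := by
    grw [fnorm_mul_le_opNorm_mul, l2_opNorm_transpose, hU]
    exact fnorm_nonneg P
  have hc : 0 ≤ c := (norm_nonneg U).trans hU
  rw [mul_assoc, ← Real.sqrt_sq (mul_nonneg hc (fnorm_nonneg P)), ← Real.sqrt_mul zero_le_two]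
  gcongr
  nlinarith [fnorm_nonneg (P * V), fnorm_nonneg (Uᵀ * P)]

lemma fnorm_tangentMap_le_of_opNorm_le (hU : ‖U‖ ≤ c) (hV : ‖V‖ ≤ c)
    (P : Matrix (Fin m) (Fin n) ℝ) :
    fnorm (tangentMap U V P) ≤ √2 * c * √(fnorm (P * V) ^ 2 + fnorm (Uᵀ * P) ^ 2) := by
  have hc : 0 ≤ c := (norm_nonneg U).trans hU
  have hsum : fnorm (P * V) + fnorm (Uᵀ * P) ≤
      √2 * √(fnorm (P * V) ^ 2 + fnorm (Uᵀ * P) ^ 2) := by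
    rw [← Real.sqrt_mul zero_le_two]
    exact Real.le_sqrt_of_sq_le (by nlinarith [sq_nonneg (fnorm (P * V) - fnorm (Uᵀ * P))])
  calc fnorm (tangentMap U V P) ≤ fnorm (P * V) * ‖V‖ + ‖U‖ * fnorm (Uᵀ * P) :=
        fnorm_tangentMap_le U V P
    _ ≤ c * (fnorm (P * V) + fnorm (Uᵀ * P)) := by
        nlinarith [fnorm_nonneg (P * V), fnorm_nonneg (Uᵀ * P)]
    _ ≤ √2 * c * √(fnorm (P * V) ^ 2 + fnorm (Uᵀ * P) ^ 2) := by
        rw [mul_comm √2, mul_assoc]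
        exact mul_le_mul_of_nonneg_left hsum hc

end Tangent

lemma div_sub_le_of_inner_bounds {α β σ e x S T : ℝ} (hσ : 0 ≤ σ) (he : 0 < e) (hαβ : α ≤ β)
    (hT : 0 ≤ T) (hS : √S ≤ 2 * √σ * e) (hx : x ≤ 2 * √σ * √S)
    (hinner : (α + β) / 2 * S - (β - α) / 2 * e * x ≤ T * √S) :
    (β + α) * S / (2 * e) - 2 * σ * (β - α) * e ≤ 2 * √σ * T := by
  have hβα : 0 ≤ (β - α) * e := mul_nonneg (sub_nonneg.2 hαβ) he.le
  have h1 := mul_le_mul_of_nonneg_left hS hT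
  have h2 := mul_le_mul_of_nonneg_left hx hβα
  have h3 := mul_le_mul_of_nonneg_left hS (mul_nonneg hβα (Real.sqrt_nonneg σ))
  have h4 : (β - α) * e ^ 2 * √σ ^ 2 = (β - α) * e ^ 2 * σ := by rw [Real.sq_sqrt hσ]
  rw [sub_le_iff_le_add, div_le_iff₀ (by positivity)]
  linarith

theorem case2_key_inequality_general
    {m n p κ : ℕ} (A : Matrix (Fin m) (Fin n) ℝ →ₗ[ℝ] (Fin p → ℝ))
    (r : ℕ) (α β : ℝ)
    (hα : α = lamMin A (2 * r)) (hβ : β = lamMax A (2 * r))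
    (M : Matrix (Fin m) (Fin n) ℝ) (hMr : M.rank ≤ r)
    (σ1 : ℝ) (hσ1pos : 0 < σ1)
    (U : Matrix (Fin m) (Fin κ) ℝ) (V : Matrix (Fin n) (Fin κ) ℝ)
    (hUr : U.rank ≤ r)
    (hUnorm : specNorm U ≤ Real.sqrt (2 * σ1)) (hVnorm : specNorm V ≤ Real.sqrt (2 * σ1))
    (E : Matrix (Fin m) (Fin n) ℝ) (hE : E = U * Vᵀ - M) (hEne : E ≠ 0) :
    (β + α) * ((fnorm (E * V)) ^ 2 + (fnorm (Uᵀ * E)) ^ 2) / (2 * fnorm E) -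
        2 * σ1 * (β - α) * fnorm E ≤
      2 * Real.sqrt σ1 *
        Real.sqrt ((fnorm ((AstarA A E) * V)) ^ 2 + (fnorm (Uᵀ * (AstarA A E))) ^ 2) := by
  set X := tangentMap U V E
  have hrank (t : ℝ) : (E + t • X).rank ≤ 2 * r := by
    subst hE
    exact (rank_add_smul_tangentMap_le U V M t).trans (by omega)
  have hαβ : α ≤ β := hα ▸ hβ ▸ lamMin_le_lamMax (by simpa using hrank 0) hEne
  have hinner := vdot_ge_of_rank_add_smul_le A hrank
  rw [← hα, ← hβ, finner_self_tangentMap, ← finner_adjApply] at hinner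
  have h2c : √2 * √(2 * σ1) = 2 * √σ1 := by
    rw [← Real.sqrt_mul zero_le_two, ← mul_assoc, Real.sqrt_mul (by norm_num),
      show (2 : ℝ) * 2 = 2 ^ 2 by norm_num, Real.sqrt_sq zero_le_two]
  rw [specNorm_eq_l2_opNorm] at hUnorm hVnorm
  have hS := sqrt_fnorm_sq_add_le hUnorm hVnorm E
  have hX := fnorm_tangentMap_le_of_opNorm_le hUnorm hVnorm E
  rw [h2c] at hS hX
  exact div_sub_le_of_inner_bounds hσ1pos.le (fnorm_pos hEne) hαβ (Real.sqrt_nonneg _) hS hX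
    (hinner.trans (finner_tangentMap_le U V (AstarA A E) E))

/-- the key inequality of Case 2 in the proof of Theorem 4.1. -/
theorem case2_key_inequality
    {m n p κ : ℕ} (A : Matrix (Fin m) (Fin n) ℝ →ₗ[ℝ] (Fin p → ℝ))
    (r : ℕ) (hr1 : 1 ≤ r) (α β : ℝ)
    (hα : α = lamMin A (2 * r)) (hβ : β = lamMax A (2 * r)) (hαpos : 0 < α)
    (M : Matrix (Fin m) (Fin n) ℝ) (hMr : M.rank ≤ r)
    (σ1 : ℝ) (hσ1 : σ1 = singularValue 1 M) (hσ1pos : 0 < σ1)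
    (U : Matrix (Fin m) (Fin κ) ℝ) (V : Matrix (Fin n) (Fin κ) ℝ)
    (hUr : U.rank ≤ r) (hVr : V.rank ≤ r)
    (hUnorm : specNorm U ≤ Real.sqrt (2 * σ1)) (hVnorm : specNorm V ≤ Real.sqrt (2 * σ1))
    (E : Matrix (Fin m) (Fin n) ℝ) (hE : E = U * Vᵀ - M) (hEne : E ≠ 0) :
    (β + α) * ((fnorm (E * V)) ^ 2 + (fnorm (Uᵀ * E)) ^ 2) / (2 * fnorm E) -
        2 * σ1 * (β - α) * fnorm E ≤
      2 * Real.sqrt σ1 *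
        Real.sqrt ((fnorm ((AstarA A E) * V)) ^ 2 + (fnorm (Uᵀ * (AstarA A E))) ^ 2) :=
  case2_key_inequality_general A r α β hα hβ M hMr σ1 hσ1pos U V hUr hUnorm hVnorm E hE hEne

end Paper
end
end

section
/- Let a > 1 and φ(t) = ((a−1)/(a+1))t² + (2/(a+1))t for t ∈ ℝ. Let ψ(t) = φ(t) for t ∈ [0,1] and ψ(t) = +∞ otherwise, and let ψ*(s) = sup_{t∈ℝ}(st − ψ(t)) be its conjugate. Then for all s ∈ ℝ: ψ*(s) = 0 if s ≤ 2/(a+1); ψ*(s) = ((a+1)s − 2)²/(4(a² − 1)) if 2/(a+1) < s ≤ 2a/(a+1); and ψ*(s) = s − 1 if s > 2a/(a+1). -/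
/-!
On `[0,1]` the map `t ↦ st − φ(t)` is a concave parabola with vertex `((a+1)s − 2)/(2(a−1))`,
and `ψ*(s)` is its maximum over `[0,1]`. That maximum is attained at `0`, at the vertex, or at `1`,
according as the vertex lies left of, inside, or right of `[0,1]`; in the last two cases
completing the square, resp. factoring out `1 − t`, certifies the maximum.
-/

open scoped BigOperators

noncomputable section

namespace Paper

open Matrix

theorem iSup_coe_sub_ite_top_eq_of_isGreatest {α : Type*} {S : Set α} [DecidablePred (· ∈ S)]
    {f g : α → ℝ} {V : ℝ} (h : IsGreatest ((fun t => f t - g t) '' S) V) :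
    (⨆ t, ((f t : ℝ) : EReal) - if t ∈ S then ((g t : ℝ) : EReal) else ⊤) = V := by
  obtain ⟨⟨t₀, ht₀, hV⟩, hle⟩ := h
  refine le_antisymm (iSup_le fun t => ?_) (le_iSup_of_le t₀ ?_)
  · split_ifs with ht
    · exact_mod_cast hle ⟨t, ht, rfl⟩
    · simp
  · simp only [ht₀, if_true, ← EReal.coe_sub, hV, le_refl]

section QuadraticOnUnitInterval

variable {b c s : ℝ}

theorem isGreatest_sub_quadratic_image_Icc_at_zero (hc : 0 ≤ c) (hs : s ≤ b) :
    IsGreatest ((fun t => s * t - (c * t ^ 2 + b * t)) '' Set.Icc 0 1) 0 := by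
  refine ⟨⟨0, by simp, by ring⟩, ?_⟩
  rintro _ ⟨t, ht, rfl⟩
  nlinarith [mul_nonneg ht.1 (sub_nonneg.2 hs), mul_nonneg hc (sq_nonneg t)]

theorem isGreatest_sub_quadratic_image_Icc_at_vertex (hc : 0 < c) (hbs : b ≤ s)
    (hs : s ≤ b + 2 * c) :
    IsGreatest ((fun t => s * t - (c * t ^ 2 + b * t)) '' Set.Icc 0 1)
      ((s - b) ^ 2 / (4 * c)) := by
  set t₀ := (s - b) / (2 * c) with ht₀_def
  have hsquare : ∀ t,
      (s - b) ^ 2 / (4 * c) - (s * t - (c * t ^ 2 + b * t)) = c * (t - t₀) ^ 2 := by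
    intro t
    rw [ht₀_def]
    field_simp
    ring
  have ht₀ : t₀ ∈ Set.Icc (0 : ℝ) 1 :=
    ⟨div_nonneg (by linarith) (by linarith), (div_le_one (by linarith)).2 (by linarith)⟩
  refine ⟨⟨t₀, ht₀, by linarith [hsquare t₀, show c * (t₀ - t₀) ^ 2 = 0 by simp]⟩, ?_⟩
  rintro _ ⟨t, -, rfl⟩
  nlinarith [hsquare t, mul_nonneg hc.le (sq_nonneg (t - t₀))]

theorem isGreatest_sub_quadratic_image_Icc_at_one (hc : 0 ≤ c) (hs : b + 2 * c ≤ s) :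
    IsGreatest ((fun t => s * t - (c * t ^ 2 + b * t)) '' Set.Icc 0 1) (s - b - c) := by
  refine ⟨⟨1, by simp, by ring⟩, ?_⟩
  rintro _ ⟨t, ht, rfl⟩
  have hfactor :
      s - b - c - (s * t - (c * t ^ 2 + b * t)) = (1 - t) * (s - b - c * (1 + t)) := by
    ring
  have hslope : 0 ≤ s - b - c * (1 + t) := by nlinarith [ht.2]
  nlinarith [mul_nonneg (sub_nonneg.2 ht.2) hslope]

end QuadraticOnUnitInterval

/-- explicit formula for the conjugate `ψ*` when
`φ(t) = ((a−1)/(a+1))t² + (2/(a+1))t` (formula (5.1)). -/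
theorem conjugate_of_quadratic_phi (a : ℝ) (ha : 1 < a)
    (φ : ℝ → ℝ) (hφ : ∀ t : ℝ, φ t = ((a - 1) / (a + 1)) * t ^ 2 + (2 / (a + 1)) * t)
    (ψ : ℝ → EReal)
    (hψ : ∀ t : ℝ, ψ t = if t ∈ Set.Icc (0 : ℝ) 1 then ((φ t : ℝ) : EReal) else ⊤)
    (ψs : ℝ → EReal) (hψs : ∀ s : ℝ, ψs s = ⨆ t : ℝ, ((s * t : ℝ) : EReal) - ψ t) :
    ∀ s : ℝ,
      (s ≤ 2 / (a + 1) → ψs s = 0) ∧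
      (2 / (a + 1) < s → s ≤ 2 * a / (a + 1) →
        ψs s = ((((a + 1) * s - 2) ^ 2 / (4 * (a ^ 2 - 1)) : ℝ) : EReal)) ∧
      (2 * a / (a + 1) < s → ψs s = ((s - 1 : ℝ) : EReal)) := by
  have ha₁ : 0 < a + 1 := by linarith
  have hc : 0 < (a - 1) / (a + 1) := div_pos (by linarith) ha₁
  have ha₂ : a - 1 ≠ 0 := by linarith
  have ha₃ : a ^ 2 - 1 ≠ 0 := by nlinarith
  have hvertex : 2 / (a + 1) + 2 * ((a - 1) / (a + 1)) = 2 * a / (a + 1) := by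
    field_simp
    ring
  intro s
  simp only [hψs, hψ, hφ]
  refine ⟨fun hs => ?_, fun hs₁ hs₂ => ?_, fun hs => ?_⟩
  · exact_mod_cast iSup_coe_sub_ite_top_eq_of_isGreatest
      (isGreatest_sub_quadratic_image_Icc_at_zero hc.le hs)
  · rw [iSup_coe_sub_ite_top_eq_of_isGreatest
      (isGreatest_sub_quadratic_image_Icc_at_vertex hc hs₁.le (hvertex ▸ hs₂))]
    congr 1
    field_simp
    ring
  · rw [iSup_coe_sub_ite_top_eq_of_isGreatest
      (isGreatest_sub_quadratic_image_Icc_at_one hc.le (hvertex ▸ hs.le))]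
    congr 1
    field_simp
    ring

end Paper
end
end
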